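/- Let Q ⊂ ℝ^n be compact convex with diameter D, f convex differentiable with minimizer x* in the interior of Q (B(x*, r) ⊆ Q for some r > 0), and suppose f is c-gradient-dominated: (f(x) - f(x*))/c² ≤ ‖∇f(x)‖² for all x ∈ Q. Fix x ∈ Q, s ∈ argmin_{z∈Q} ⟪∇f(x), z⟫, d = s - x, L > 0, and suppose the sufficient-decrease inequality f(x⁺) ≤ f(x) - (⟪∇f(x), d⟫)²/(2L‖d‖²) holds for the next iterate x⁺. Then h(x⁺) ≤ h(x)·(1 - r²/(2Lc²D²)), where h(y) := f(y) - f(x*). -/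

import Mathlib

/-!
Convexity together with the minimality of `s` against the point `x* - r ∇f(x)/‖∇f(x)‖` of the ball
`B(x*, r) ⊆ Q` gives `r ‖∇f(x)‖ ≤ ⟪∇f(x), x - s⟫`. Squaring, bounding `‖s - x‖ ≤ diam Q` and using
gradient dominance `h(x) ≤ c² ‖∇f(x)‖²` turns the guaranteed decrease `⟪∇f(x), s - x⟫² / (2L‖s - x‖²)`
into at least the fraction `r² / (2 L c² D²)` of `h(x)`.
-/

open RealInnerProductSpace Metric

theorem ConvexOn.fderiv_sub_le_sub {E : Type*} [NormedAddCommGroup E] [NormedSpace ℝ E]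
    {Q : Set E} {f : E → ℝ} {f' : E →L[ℝ] ℝ} {x y : E} (hf : ConvexOn ℝ Q f)
    (hf' : HasFDerivAt f f' x) (hx : x ∈ Q) (hy : y ∈ Q) :
    f' (y - x) ≤ f y - f x := by
  have hline := hf.comp_affineMap (AffineMap.lineMap x y : ℝ →ᵃ[ℝ] E)
  have hderiv : HasDerivAt (f ∘ AffineMap.lineMap (k := ℝ) x y) (f' (y - x)) 0 := by
    refine HasFDerivAt.comp_hasDerivAt (0 : ℝ) ?_ AffineMap.hasDerivAt_lineMap
    rwa [AffineMap.lineMap_apply_zero]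
  simpa [slope_def_field] using
    hline.le_slope_of_hasDerivAt (by simpa using hx) (by simpa using hy) one_pos hderiv

section InnerProductSpace

variable {E : Type*} [NormedAddCommGroup E] [InnerProductSpace ℝ E]

theorem ConvexOn.inner_gradient_sub_le_sub [CompleteSpace E] {Q : Set E} {f : E → ℝ} {g x y : E}
    (hf : ConvexOn ℝ Q f) (hg : HasGradientAt f g x) (hx : x ∈ Q) (hy : y ∈ Q) :
    ⟪g, y - x⟫ ≤ f y - f x := by
  simpa using hf.fderiv_sub_le_sub hg.hasFDerivAt hx hy

theorem inner_le_inner_sub_mul_norm_of_closedBall_subset {Q : Set E} {g s x₀ : E} {r : ℝ}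
    (hr : 0 ≤ r) (hball : closedBall x₀ r ⊆ Q) (hs : ∀ z ∈ Q, ⟪g, s⟫ ≤ ⟪g, z⟫) :
    ⟪g, s⟫ ≤ ⟪g, x₀⟫ - r * ‖g‖ := by
  -- The minimizer of `⟪g, ·⟫` on the ball; `‖0‖⁻¹ = 0` makes it `x₀` when `g = 0`.
  set z := x₀ - (r * ‖g‖⁻¹) • g
  have hz : z ∈ Q := by
    refine hball ?_
    rw [mem_closedBall, dist_eq_norm, sub_sub_cancel_left, norm_neg, norm_smul, Real.norm_eq_abs,
      abs_of_nonneg (by positivity), mul_assoc]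
    exact mul_le_of_le_one_right hr (inv_mul_le_one_of_le₀ le_rfl (norm_nonneg g))
  have hgz : ⟪g, z⟫ = ⟪g, x₀⟫ - r * ‖g‖ := by
    rw [inner_sub_right, real_inner_smul_right, real_inner_self_eq_norm_sq, mul_assoc,
      inv_mul_eq_div, sq, mul_self_div_self]
  exact hgz ▸ hs z hz

theorem mul_norm_le_inner_sub_of_closedBall_subset [CompleteSpace E] {Q : Set E} {f : E → ℝ}
    {g x s x₀ : E} {r : ℝ} (hf : ConvexOn ℝ Q f) (hg : HasGradientAt f g x) (hx : x ∈ Q)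
    (hr : 0 ≤ r) (hball : closedBall x₀ r ⊆ Q) (hmin : f x₀ ≤ f x)
    (hs : ∀ z ∈ Q, ⟪g, s⟫ ≤ ⟪g, z⟫) :
    r * ‖g‖ ≤ ⟪g, x - s⟫ := by
  have hconv := hf.inner_gradient_sub_le_sub hg hx (hball (mem_closedBall_self hr))
  have hlmo := inner_le_inner_sub_mul_norm_of_closedBall_subset hr hball hs
  rw [inner_sub_right] at hconv ⊢
  linarith

theorem div_sq_le_inner_sq_div_norm_sq {g d : E} {a D : ℝ} (ha : 0 ≤ a) (hd : ‖d‖ ≤ D)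
    (h : a ≤ ⟪g, d⟫ ^ 2) :
    a / D ^ 2 ≤ ⟪g, d⟫ ^ 2 / ‖d‖ ^ 2 := by
  rcases eq_or_ne d 0 with rfl | hd₀
  · simp [le_antisymm (by simpa using h) ha]
  · have hpos : 0 < ‖d‖ := norm_pos_iff.mpr hd₀
    exact div_le_div₀ (sq_nonneg _) h (by positivity) (pow_le_pow_left₀ hpos.le hd 2)

end InnerProductSpace

theorem stmt9_general {n : ℕ} (Q : Set (EuclideanSpace ℝ (Fin n)))
    (hQconv : Convex ℝ Q) (hQcomp : IsCompact Q)
    (f : EuclideanSpace ℝ (Fin n) → ℝ)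
    (hconv : ConvexOn ℝ Set.univ f) (hdiff : Differentiable ℝ f)
    (xstar : EuclideanSpace ℝ (Fin n))
    (hmin : ∀ y ∈ Q, f xstar ≤ f y)
    (r : ℝ) (hr : 0 < r) (hball : Metric.closedBall xstar r ⊆ Q)
    (c : ℝ)
    (hgd : ∀ x ∈ Q, (f x - f xstar) / c ^ 2 ≤ ‖gradient f x‖ ^ 2)
    (x s xplus : EuclideanSpace ℝ (Fin n)) (hx : x ∈ Q) (hs : s ∈ Q)
    (hsmin : ∀ z ∈ Q, ⟪gradient f x, s⟫ ≤ ⟪gradient f x, z⟫)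
    (L : ℝ) (hL : 0 < L)
    (hdec : f xplus ≤ f x -
      (⟪gradient f x, s - x⟫) ^ 2 / (2 * L * ‖s - x‖ ^ 2)) :
    f xplus - f xstar ≤
      (f x - f xstar) * (1 - r ^ 2 / (2 * L * c ^ 2 * (Metric.diam Q) ^ 2)) := by
  set g := gradient f x
  set D := diam Q
  have hgap : r * ‖g‖ ≤ ⟪g, x - s⟫ :=
    mul_norm_le_inner_sub_of_closedBall_subset (hconv.subset (Set.subset_univ Q) hQconv)
      (hdiff x).hasGradientAt hx hr.le hball (hmin x hx) hsmin
  have hgap_sq : r ^ 2 * ‖g‖ ^ 2 ≤ ⟪g, s - x⟫ ^ 2 := by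
    rw [← mul_pow, ← neg_sub x s, inner_neg_right, neg_sq]
    exact pow_le_pow_left₀ (by positivity) hgap 2
  have hdiam : ‖s - x‖ ≤ D := by
    simpa [dist_eq_norm] using dist_le_diam_of_mem hQcomp.isBounded hs hx
  have hrate : r ^ 2 * ‖g‖ ^ 2 / D ^ 2 ≤ ⟪g, s - x⟫ ^ 2 / ‖s - x‖ ^ 2 :=
    div_sq_le_inner_sq_div_norm_sq (by positivity) hdiam hgap_sq
  have hdecrease : (f x - f xstar) * (r ^ 2 / (2 * L * c ^ 2 * D ^ 2)) ≤
      ⟪g, s - x⟫ ^ 2 / (2 * L * ‖s - x‖ ^ 2) :=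
    calc (f x - f xstar) * (r ^ 2 / (2 * L * c ^ 2 * D ^ 2))
        = r ^ 2 * ((f x - f xstar) / c ^ 2) / D ^ 2 / (2 * L) := by ring
      _ ≤ r ^ 2 * ‖g‖ ^ 2 / D ^ 2 / (2 * L) := by gcongr; exact hgd x hx
      _ ≤ ⟪g, s - x⟫ ^ 2 / ‖s - x‖ ^ 2 / (2 * L) := by gcongr
      _ = ⟪g, s - x⟫ ^ 2 / (2 * L * ‖s - x‖ ^ 2) := by ring
  linarith

theorem stmt9 {n : ℕ} (Q : Set (EuclideanSpace ℝ (Fin n)))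
    (hQconv : Convex ℝ Q) (hQcomp : IsCompact Q)
    (f : EuclideanSpace ℝ (Fin n) → ℝ)
    (hconv : ConvexOn ℝ Set.univ f) (hdiff : Differentiable ℝ f)
    (xstar : EuclideanSpace ℝ (Fin n)) (hxstar : xstar ∈ Q)
    (hmin : ∀ y ∈ Q, f xstar ≤ f y)
    (r : ℝ) (hr : 0 < r) (hball : Metric.closedBall xstar r ⊆ Q)
    (c : ℝ) (hc : 0 < c)
    (hgd : ∀ x ∈ Q, (f x - f xstar) / c ^ 2 ≤ ‖gradient f x‖ ^ 2)
    (x s xplus : EuclideanSpace ℝ (Fin n)) (hx : x ∈ Q) (hs : s ∈ Q)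
    (hsmin : ∀ z ∈ Q, ⟪gradient f x, s⟫ ≤ ⟪gradient f x, z⟫)
    (L : ℝ) (hL : 0 < L)
    (hdec : f xplus ≤ f x -
      (⟪gradient f x, s - x⟫) ^ 2 / (2 * L * ‖s - x‖ ^ 2)) :
    f xplus - f xstar ≤
      (f x - f xstar) * (1 - r ^ 2 / (2 * L * c ^ 2 * (Metric.diam Q) ^ 2)) :=
  stmt9_general Q hQconv hQcomp f hconv hdiff xstar hmin r hr hball c hgd x s xplus hx hs hsmin L hL
    hdec
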